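/- arXiv:2008.00385 — 2 statements merged into one kernel-verified Lean document; each statement's English description precedes it below -/
import Mathlib

section
/- For all x, y in ℝ^n and p ≥ 2, the map T(x) = |x|^{p-2} x satisfies ⟨x - y, |x|^{p-2}x - |y|^{p-2}y⟩ ≥ 2^{2-p} |x - y|^p, i.e., T is (p, 2^{2-p})-strongly monotone. -/
/-!
Put `a = ‖x‖`, `b = ‖y‖` and `s = ‖x - y‖ ^ 2`. Since `2 * ⟪x, y⟫ = a ^ 2 + b ^ 2 - s`, the inner
product is an affine function of `s`, whereas `2 ^ (2 - p) * ‖x - y‖ ^ p = 2 ^ (2 - p) * s ^ (p / 2)`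
is convex in `s`. As `s` ranges over `[(a - b) ^ 2, (a + b) ^ 2]`, it suffices to check the two
endpoints, i.e. collinear `x` and `y`. There the inequality is one-dimensional: superadditivity of
`t ↦ t ^ (p - 1)` handles `|a - b|`, and the power mean inequality handles `a + b`.
-/

open RealInnerProductSpace Set

namespace Real

lemma rpow_eq_rpow_sub_natCast_mul_pow {x p : ℝ} (hx : 0 ≤ x) (hp : p ≠ 0) (n : ℕ) :
    x ^ p = x ^ (p - n) * x ^ n := by
  rw [← rpow_natCast, ← rpow_add' hx (by simpa using hp), sub_add_cancel]

lemma sq_rpow_div_two {x : ℝ} (hx : 0 ≤ x) (p : ℝ) : (x ^ 2) ^ (p / 2) = x ^ p := by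
  rw [← rpow_natCast_mul hx]
  congr 1
  ring

lemma sub_rpow_le_rpow_sub_rpow {a b q : ℝ} (hq : 1 ≤ q) (hb : 0 ≤ b) (hba : b ≤ a) :
    (a - b) ^ q ≤ a ^ q - b ^ q := by
  have := add_rpow_le_rpow_add (sub_nonneg.2 hba) hb hq
  rw [sub_add_cancel] at this
  linarith

lemma abs_sub_rpow_le_rpow_sub_one_sub_mul_sub {a b p : ℝ} (hp : 2 ≤ p) (ha : 0 ≤ a)
    (hb : 0 ≤ b) : |a - b| ^ p ≤ (a ^ (p - 1) - b ^ (p - 1)) * (a - b) := by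
  wlog hba : b ≤ a generalizing a b
  · rw [abs_sub_comm]
    linarith [this hb ha (le_of_not_ge hba)]
  have hab : 0 ≤ a - b := sub_nonneg.2 hba
  calc |a - b| ^ p = (a - b) ^ (p - 1) * (a - b) := by
        rw [abs_of_nonneg hab, rpow_eq_rpow_sub_natCast_mul_pow hab (by linarith) 1]
        norm_num
    _ ≤ (a ^ (p - 1) - b ^ (p - 1)) * (a - b) := by
        gcongr
        exact sub_rpow_le_rpow_sub_rpow (by linarith) hb hba

lemma two_rpow_two_sub_mul_add_rpow_le {a b p : ℝ} (hp : 2 ≤ p) (ha : 0 ≤ a) (hb : 0 ≤ b) :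
    2 ^ (2 - p) * (a + b) ^ p ≤ (a ^ (p - 1) + b ^ (p - 1)) * (a + b) := by
  lift a to NNReal using ha
  lift b to NNReal using hb
  have hmean : ((a + b : NNReal) : ℝ) ^ (p - 1) ≤ 2 ^ (p - 2) * (a ^ (p - 1) + b ^ (p - 1)) := by
    have := NNReal.rpow_add_le_mul_rpow_add_rpow a b (p := p - 1) (by linarith)
    rw [show p - 1 - 1 = p - 2 by ring] at this
    exact_mod_cast this
  calc 2 ^ (2 - p) * ((a + b : NNReal) : ℝ) ^ p
      = 2 ^ (2 - p) * (((a + b : NNReal) : ℝ) ^ (p - 1) * (a + b : NNReal)) := by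
        rw [rpow_eq_rpow_sub_natCast_mul_pow (NNReal.coe_nonneg _) (by linarith) 1]
        norm_num
    _ ≤ 2 ^ (2 - p) * (2 ^ (p - 2) * (a ^ (p - 1) + b ^ (p - 1)) * (a + b : NNReal)) := by
        gcongr
    _ = (a ^ (p - 1) + b ^ (p - 1)) * (a + b : NNReal) := by
        rw [← mul_assoc, ← mul_assoc, ← rpow_add two_pos]
        norm_num

end Real

lemma two_rpow_two_sub_mul_rpow_div_two_le {a b s p : ℝ} (hp : 2 ≤ p) (ha : 0 ≤ a) (hb : 0 ≤ b)
    (hs : s ∈ Icc ((a - b) ^ 2) ((a + b) ^ 2)) :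
    2 ^ (2 - p) * s ^ (p / 2) ≤
      a ^ p + b ^ p - (a ^ (p - 2) + b ^ (p - 2)) * ((a ^ 2 + b ^ 2 - s) / 2) := by
  set k := a ^ (p - 2) + b ^ (p - 2)
  have hconvex : ConvexOn ℝ (Ici 0) fun t : ℝ ↦ 2 ^ (2 - p) * t ^ (p / 2) - k / 2 * t :=
    ((convexOn_rpow (by linarith)).smul (by positivity)).sub
      ((concaveOn_id (convex_Ici 0)).smul (by positivity))
  have hpow : ∀ {x : ℝ}, 0 ≤ x → x ^ p = x ^ (p - 2) * x ^ 2 ∧ x ^ (p - 1) = x ^ (p - 2) * x :=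
    fun hx ↦ ⟨Real.rpow_eq_rpow_sub_natCast_mul_pow hx (by linarith) 2, by
      rw [← Real.rpow_add_one' hx (by linarith)]
      ring_nf⟩
  obtain ⟨hap, hap'⟩ := hpow ha
  obtain ⟨hbp, hbp'⟩ := hpow hb
  have hlow : 2 ^ (2 - p) * ((a - b) ^ 2) ^ (p / 2) ≤ (a ^ (p - 1) - b ^ (p - 1)) * (a - b) := by
    rw [← sq_abs, Real.sq_rpow_div_two (abs_nonneg _)]
    refine (mul_le_of_le_one_left (by positivity) ?_).trans
      (Real.abs_sub_rpow_le_rpow_sub_one_sub_mul_sub hp ha hb)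
    exact Real.rpow_le_one_of_one_le_of_nonpos one_le_two (by linarith)
  have hhigh : 2 ^ (2 - p) * ((a + b) ^ 2) ^ (p / 2) ≤ (a ^ (p - 1) + b ^ (p - 1)) * (a + b) := by
    rw [Real.sq_rpow_div_two (by positivity)]
    exact Real.two_rpow_two_sub_mul_add_rpow_le hp ha hb
  have hmax := (hconvex.le_max_of_mem_Icc (sq_nonneg (a - b)) (sq_nonneg (a + b)) hs).trans
    (max_le (c := a ^ p + b ^ p - k * (a ^ 2 + b ^ 2) / 2) ?_ ?_)
  · linear_combination hmax
  · rw [hap', hbp'] at hlow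
    rw [hap, hbp]
    linear_combination hlow
  · rw [hap', hbp'] at hhigh
    rw [hap, hbp]
    linear_combination hhigh

theorem two_rpow_two_sub_mul_norm_sub_rpow_le_inner {E : Type*} [NormedAddCommGroup E]
    [InnerProductSpace ℝ E] {p : ℝ} (hp : 2 ≤ p) (x y : E) :
    2 ^ (2 - p) * ‖x - y‖ ^ p ≤ ⟪x - y, ‖x‖ ^ (p - 2) • x - ‖y‖ ^ (p - 2) • y⟫ := by
  have hs : ‖x - y‖ ^ 2 ∈ Icc ((‖x‖ - ‖y‖) ^ 2) ((‖x‖ + ‖y‖) ^ 2) :=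
    ⟨sq_le_sq.2 (by simpa using abs_norm_sub_norm_le x y),
      pow_le_pow_left₀ (norm_nonneg _) (norm_sub_le x y) 2⟩
  have hinner : ⟪x - y, ‖x‖ ^ (p - 2) • x - ‖y‖ ^ (p - 2) • y⟫ = ‖x‖ ^ p + ‖y‖ ^ p -
      (‖x‖ ^ (p - 2) + ‖y‖ ^ (p - 2)) * ((‖x‖ ^ 2 + ‖y‖ ^ 2 - ‖x - y‖ ^ 2) / 2) := by
    rw [Real.rpow_eq_rpow_sub_natCast_mul_pow (p := p) (norm_nonneg x) (by linarith) 2,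
      Real.rpow_eq_rpow_sub_natCast_mul_pow (p := p) (norm_nonneg y) (by linarith) 2,
      norm_sub_sq_real]
    simp only [inner_sub_left, inner_sub_right, real_inner_smul_right, real_inner_self_eq_norm_sq,
      real_inner_comm x y]
    push_cast
    ring
  rw [← Real.sq_rpow_div_two (norm_nonneg _), hinner]
  exact two_rpow_two_sub_mul_rpow_div_two_le hp (norm_nonneg x) (norm_nonneg y) hs

theorem stmt_0 (n : ℕ) (p : ℝ) (hp : 2 ≤ p) (x y : EuclideanSpace ℝ (Fin n)) :
    (2 : ℝ) ^ (2 - p) * ‖x - y‖ ^ p ≤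
      ⟪x - y, (‖x‖ ^ (p - 2)) • x - (‖y‖ ^ (p - 2)) • y⟫ :=
  two_rpow_two_sub_mul_norm_sub_rpow_le_inner hp x y
end

section
/- Let H be a real Hilbert space and T : H → H a monotone map (⟨x - y, Tx - Ty⟩ ≥ 0 for all x, y) that is everywhere defined. Then T is locally bounded at every point: for each v ∈ H there exist r > 0 and m > 0 such that ‖Tx‖ ≤ m whenever ‖x - v‖ ≤ r. -/
/-!
Rockafellar's argument via the uniform boundedness principle. Monotonicity gives, for every `x`
and every `u` in the unit ball around `v`,
`⟪T u, x - v⟫ ≤ ‖T x‖ (‖x - v‖ + 1) + ‖u - v‖ ‖T u‖`,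
so the functionals `⟪T u, ·⟫ / (1 + ‖u - v‖ ‖T u‖)` are pointwise bounded. Banach–Steinhaus
bounds their norms by some `K`, i.e. `‖T u‖ ≤ K (1 + ‖u - v‖ ‖T u‖)`, and for `‖u - v‖ ≤ 1 / 2K`
this rearranges to `‖T u‖ ≤ 2K`.
-/

open RealInnerProductSpace

namespace MonotoneOperator

variable {H : Type*} [NormedAddCommGroup H] [InnerProductSpace ℝ H] {T : H → H}

theorem inner_sub_le (hT : ∀ x y : H, 0 ≤ ⟪x - y, T x - T y⟫) (u v x : H) :
    ⟪T u, x - v⟫ ≤ ‖T x‖ * (‖x - v‖ + ‖u - v‖) + ‖T u‖ * ‖u - v‖ := by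
  have hmono : ⟪T u, x - u⟫ ≤ ⟪T x, x - u⟫ := by
    have h := hT x u
    rw [inner_sub_right, real_inner_comm (T x), real_inner_comm (T u)] at h
    linarith
  have hxu : ‖x - u‖ ≤ ‖x - v‖ + ‖u - v‖ := by
    simpa only [norm_sub_rev v u] using norm_sub_le_norm_sub_add_norm_sub x v u
  calc ⟪T u, x - v⟫ = ⟪T u, x - u⟫ + ⟪T u, u - v⟫ := by
        rw [← inner_add_right, sub_add_sub_cancel]
    _ ≤ ‖T x‖ * ‖x - u‖ + ‖T u‖ * ‖u - v‖ :=
        add_le_add (hmono.trans (real_inner_le_norm _ _)) (real_inner_le_norm _ _)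
    _ ≤ ‖T x‖ * (‖x - v‖ + ‖u - v‖) + ‖T u‖ * ‖u - v‖ := by gcongr

theorem inner_le_mul_one_add (hT : ∀ x y : H, 0 ≤ ⟪x - y, T x - T y⟫) {u v : H}
    (hu : ‖u - v‖ ≤ 1) (z : H) :
    ⟪T u, z⟫ ≤ (‖T (v + z)‖ * (‖z‖ + 1) + 1) * (1 + ‖u - v‖ * ‖T u‖) := by
  have h := inner_sub_le hT u v (v + z)
  rw [add_sub_cancel_left] at h
  have hA : 0 ≤ ‖T (v + z)‖ * (‖z‖ + 1) := by positivity
  have hs : 0 ≤ ‖u - v‖ * ‖T u‖ := by positivity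
  have : ‖T (v + z)‖ * (‖z‖ + ‖u - v‖) ≤ ‖T (v + z)‖ * (‖z‖ + 1) := by gcongr
  nlinarith [mul_nonneg hA hs]

theorem exists_abs_inner_le (hT : ∀ x y : H, 0 ≤ ⟪x - y, T x - T y⟫) (v y : H) :
    ∃ C, ∀ u : H, ‖u - v‖ ≤ 1 → |⟪T u, y⟫| ≤ C * (1 + ‖u - v‖ * ‖T u‖) := by
  refine ⟨max (‖T (v + y)‖ * (‖y‖ + 1) + 1) (‖T (v + -y)‖ * (‖y‖ + 1) + 1), fun u hu => ?_⟩
  have hα : 0 ≤ 1 + ‖u - v‖ * ‖T u‖ := by positivity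
  have hneg := inner_le_mul_one_add hT hu (-y)
  rw [inner_neg_right, norm_neg] at hneg
  exact abs_le.2
    ⟨neg_le.1 (hneg.trans (mul_le_mul_of_nonneg_right (le_max_right _ _) hα)),
      (inner_le_mul_one_add hT hu y).trans (mul_le_mul_of_nonneg_right (le_max_left _ _) hα)⟩

theorem exists_norm_le_mul_one_add [CompleteSpace H]
    (hT : ∀ x y : H, 0 ≤ ⟪x - y, T x - T y⟫) (v : H) :
    ∃ K > 0, ∀ u : H, ‖u - v‖ ≤ 1 → ‖T u‖ ≤ K * (1 + ‖u - v‖ * ‖T u‖) := by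
  let α : H → ℝ := fun u => 1 + ‖u - v‖ * ‖T u‖
  have hα : ∀ u, 0 < α u := fun u => by positivity
  let g : Metric.closedBall v 1 → H →L[ℝ] ℝ := fun u => (α u)⁻¹ • innerSL ℝ (T u)
  have hg : ∀ u y, ‖g u y‖ = |⟪T u, y⟫| / α u := fun u y => by
    simp [g, innerSL_apply_apply, abs_of_pos (hα u), div_eq_inv_mul]
  obtain ⟨K, hK⟩ := banach_steinhaus (g := g) fun y => by
    obtain ⟨C, hC⟩ := exists_abs_inner_le hT v y
    refine ⟨C, fun u => ?_⟩
    rw [hg, div_le_iff₀ (hα u)]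
    exact hC u (mem_closedBall_iff_norm.1 u.2)
  refine ⟨max K 1, by positivity, fun u hu => ?_⟩
  have h := hK ⟨u, mem_closedBall_iff_norm.2 hu⟩
  rw [norm_smul, innerSL_apply_norm, norm_inv, Real.norm_of_nonneg (hα u).le,
    inv_mul_le_iff₀ (hα u)] at h
  exact (h.trans_eq (mul_comm _ _)).trans
    (mul_le_mul_of_nonneg_right (le_max_left K 1) (hα u).le)

end MonotoneOperator

theorem stmt_10 {H : Type*} [NormedAddCommGroup H] [InnerProductSpace ℝ H]
    [CompleteSpace H] (T : H → H)
    (hmono : ∀ x y : H, 0 ≤ ⟪x - y, T x - T y⟫) (v : H) :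
    ∃ r : ℝ, 0 < r ∧ ∃ m : ℝ, 0 < m ∧ ∀ x : H, ‖x - v‖ ≤ r → ‖T x‖ ≤ m := by
  obtain ⟨K, hK, hbound⟩ := MonotoneOperator.exists_norm_le_mul_one_add hmono v
  refine ⟨min 1 (1 / (2 * K)), by positivity, 2 * K, by positivity, fun x hx => ?_⟩
  have hx1 : ‖x - v‖ ≤ 1 := hx.trans (min_le_left _ _)
  have hxK : K * ‖x - v‖ ≤ 1 / 2 :=
    calc K * ‖x - v‖ ≤ K * (1 / (2 * K)) := by gcongr; exact hx.trans (min_le_right _ _)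
      _ = 1 / 2 := by field_simp
  have := hbound x hx1
  nlinarith [norm_nonneg (T x)]
end
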